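/- If for all logit configurations o the sampled softmax gradient estimator is unbiased for the positive class, i.e. E[exp(o_1)/(exp(o_1)+∑_{k=2}^{m+1}exp(o_{s_k})/(m q_{s_k}))] = exp(o_1)/∑_{j=1}^n exp(o_j), then q must be the softmax distribution q_j = exp(o_j)/∑_{l=2}^n exp(o_l). -/

import Mathlib

open Finset Real

/-!
Write `a = exp o₁` and `X = ∑ₖ exp o_{sₖ} / (m q_{sₖ})` for the i.i.d. sample `s`, so that
`E[X] = m ∑ᵢ qᵢ exp oᵢ / (m qᵢ) = ∑ᵢ exp oᵢ`. Unbiasedness says `E[a / (a + X)] = a / (a + E[X])`;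
since `x ↦ a / (a + x)` is strictly convex and every sample has positive probability, the equality
case of Jensen's inequality makes `X` constant, equal to its mean. On the constant sample
`s = (j, …, j)` this reads `exp oⱼ / qⱼ = ∑ₗ exp oₗ`.
-/

lemma strictConvexOn_div_add {c : ℝ} (hc : 0 < c) :
    StrictConvexOn ℝ (Set.Ioi (-c)) fun x => c / (c + x) := by
  refine ⟨convex_Ioi _, fun x hx y hy hxy α β hα hβ hαβ => ?_⟩
  obtain rfl : β = 1 - α := by linarith
  simp only [Set.mem_Ioi, smul_eq_mul] at *
  have hx' : 0 < c + x := by linarith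
  have hy' : 0 < c + y := by linarith
  have hxy' : 0 < c + (α * x + (1 - α) * y) := by nlinarith
  have gap : α * (c / (c + x)) + (1 - α) * (c / (c + y)) - c / (c + (α * x + (1 - α) * y)) =
      c * α * (1 - α) * (x - y) ^ 2 / ((c + x) * (c + y) * (c + (α * x + (1 - α) * y))) := by
    field_simp
    ring
  have gap_pos :
      0 < c * α * (1 - α) * (x - y) ^ 2 / ((c + x) * (c + y) * (c + (α * x + (1 - α) * y))) := by
    have : 0 < (x - y) ^ 2 := by positivity [sub_ne_zero.mpr hxy]
    positivity
  linarith

section IidSample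

variable {ι κ : Type*} [Fintype ι] [Fintype κ] [DecidableEq κ] {Q : ι → ℝ}

lemma sum_pi_prod_eq_one (hQ : ∑ i, Q i = 1) : ∑ s : κ → ι, ∏ k, Q (s k) = 1 := by
  rw [← Fintype.prod_sum]
  simp [hQ]

lemma sum_pi_prod_mul_apply (hQ : ∑ i, Q i = 1) (f : ι → ℝ) (k : κ) :
    ∑ s : κ → ι, (∏ k', Q (s k')) * f (s k) = ∑ i, Q i * f i := by
  calc ∑ s : κ → ι, (∏ k', Q (s k')) * f (s k)
      = ∑ s : κ → ι, ∏ k', Q (s k') * (if k' = k then f (s k') else 1) := by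
        simp only [prod_mul_distrib, prod_ite_eq', mem_univ, if_true]
    _ = ∏ k', ∑ i, Q i * (if k' = k then f i else 1) :=
        (Fintype.prod_sum fun k' i => Q i * (if k' = k then f i else 1)).symm
    _ = ∑ i, Q i * f i := by simp [hQ]

lemma sum_pi_prod_mul_sum (hQ : ∑ i, Q i = 1) (f : ι → ℝ) :
    ∑ s : κ → ι, (∏ k, Q (s k)) * ∑ k, f (s k) = Fintype.card κ * ∑ i, Q i * f i := by
  simp_rw [mul_sum]
  rw [sum_comm]
  simp [sum_pi_prod_mul_apply hQ, mul_sum]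

end IidSample

theorem unbiased_implies_softmax_sampling_general {ι : Type*} [Fintype ι]
    (m : ℕ) (hm : 2 ≤ m)
    (q : ℝ → (ι → ℝ) → ι → ℝ)
    (hqpos : ∀ o1 o j, 0 < q o1 o j)
    (hq1 : ∀ o1 o, ∑ j, q o1 o j = 1)
    (hunb : ∀ (o1 : ℝ) (o : ι → ℝ),
      ∑ s : Fin m → ι, (∏ k, q o1 o (s k)) *
          (Real.exp o1 /
            (Real.exp o1 + ∑ k, Real.exp (o (s k)) / (m * q o1 o (s k)))) =
        Real.exp o1 / (Real.exp o1 + ∑ j, Real.exp (o j))) :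
    ∀ (o1 : ℝ) (o : ι → ℝ) (j : ι),
      q o1 o j = Real.exp (o j) / ∑ l, Real.exp (o l) := by
  intro o1 o j
  have hm0 : (0 : ℝ) < m := by exact_mod_cast (by omega : 0 < m)
  have hmean : ∑ s : Fin m → ι, (∏ k, q o1 o (s k)) *
      ∑ k, exp (o (s k)) / (m * q o1 o (s k)) = ∑ l, exp (o l) := by
    rw [sum_pi_prod_mul_sum (hq1 o1 o) fun i => exp (o i) / (m * q o1 o i), Fintype.card_fin,
      mul_sum]
    refine sum_congr rfl fun i _ => ?_
    field_simp [(hqpos o1 o i).ne']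
  have hweights_pos (s : Fin m → ι) : 0 < ∏ k, q o1 o (s k) :=
    prod_pos fun k _ => hqpos o1 o (s k)
  have hsample_pos (s : Fin m → ι) : -exp o1 < ∑ k, exp (o (s k)) / (m * q o1 o (s k)) :=
    (neg_neg_of_pos (exp_pos o1)).trans_le
      (sum_nonneg fun k _ => div_nonneg (exp_pos _).le (mul_pos hm0 (hqpos o1 o _)).le)
  have hconst := ((strictConvexOn_div_add (exp_pos o1)).map_sum_eq_iff
    (p := fun s : Fin m → ι => ∑ k, exp (o (s k)) / (m * q o1 o (s k)))
    (fun s _ => hweights_pos s) (sum_pi_prod_eq_one (hq1 o1 o)) (fun s _ => hsample_pos s)).mp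
    (by simpa only [smul_eq_mul, hmean] using (hunb o1 o).symm) (fun _ => j) (mem_univ _)
  simp only [smul_eq_mul, hmean, sum_const, card_univ, Fintype.card_fin, nsmul_eq_mul] at hconst
  rw [eq_div_iff (sum_pos (fun l _ => exp_pos (o l)) ⟨j, mem_univ j⟩).ne', ← hconst]
  field_simp [(hqpos o1 o j).ne']

/-- If for every logit configuration the sampled softmax estimator for the
positive class is unbiased, then the sampling distribution must be the
softmax distribution over the negative classes. -/
theorem unbiased_implies_softmax_sampling {ι : Type*} [Fintype ι]
    (hn : 2 ≤ Fintype.card ι) (m : ℕ) (hm : 2 ≤ m)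
    (q : ℝ → (ι → ℝ) → ι → ℝ)
    (hqpos : ∀ o1 o j, 0 < q o1 o j)
    (hq1 : ∀ o1 o, ∑ j, q o1 o j = 1)
    (hunb : ∀ (o1 : ℝ) (o : ι → ℝ),
      ∑ s : Fin m → ι, (∏ k, q o1 o (s k)) *
          (Real.exp o1 /
            (Real.exp o1 + ∑ k, Real.exp (o (s k)) / (m * q o1 o (s k)))) =
        Real.exp o1 / (Real.exp o1 + ∑ j, Real.exp (o j))) :
    ∀ (o1 : ℝ) (o : ι → ℝ) (j : ι),
      q o1 o j = Real.exp (o j) / ∑ l, Real.exp (o l) :=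
  unbiased_implies_softmax_sampling_general m hm q hqpos hq1 hunb
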